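/- Let ((g,[·,·]),ρ,T) be a relative Rota-Baxter Lie algebra. A triple (ω₁, ρ₁, T₁) with ω₁ ∈ Hom(Λ²g,g), ρ₁ ∈ Hom(g,gl(V)), T₁ ∈ Hom(V,g) determines an infinitesimal deformation ([·,·] + tω₁, ρ + tρ₁, T + tT₁) over K[t]/(t²) (i.e., the deformed data is again a relative Rota-Baxter Lie algebra over K[t]/(t²)) if and only if (ω₁, ρ₁, T₁) is a 2-cocycle: D(ω₁, ρ₁, T₁) = 0. Moreover, two infinitesimal deformations (ω₁,ρ₁,T₁) and (ω₁',ρ₁',T₁') are equivalent if and only if their difference is a coboundary D(N,S) for some N ∈ gl(g), S ∈ gl(V); hence equivalence classes of infinitesimal deformations are in bijection with H²(g,ρ,T). -/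
import Mathlib


section

variable {K g V : Type*} [Field K] [AddCommGroup g] [Module K g]
  [AddCommGroup V] [Module K V]

/-- The `K[t]/(t²)`-Lie bracket `[·,·] + tω₁` on `K[t]/(t²) ⊗ g ≅ g × g`
(first component = coefficient of `1`, second = coefficient of `t`). -/
def defBracket (μ ω₁ : g →ₗ[K] g →ₗ[K] g) : g × g → g × g → g × g :=
  fun X Y => (μ X.1 Y.1, μ X.1 Y.2 + μ X.2 Y.1 + ω₁ X.1 Y.1)

/-- The deformed action `ρ + tρ₁` on `K[t]/(t²) ⊗ V ≅ V × V`. -/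
def defAction (ρ ρ₁ : g →ₗ[K] Module.End K V) : g × g → V × V → V × V :=
  fun X U => (ρ X.1 U.1, ρ X.1 U.2 + ρ X.2 U.1 + ρ₁ X.1 U.1)

/-- The deformed operator `T + tT₁`. -/
def defOp (T T₁ : V →ₗ[K] g) : V × V → g × g :=
  fun U => (T U.1, T U.2 + T₁ U.1)

/-- `(ω₁,ρ₁,T₁)` determines an infinitesimal deformation of the relative Rota-Baxter
Lie algebra `((g,[·,·]),ρ,T)`: over `R = K[t]/(t²)` the deformed bracket is an
`R`-Lie bracket, the deformed action is a representation and the deformed operator is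
a relative Rota-Baxter operator. -/
def IsInfinitesimalDeformation (μ : g →ₗ[K] g →ₗ[K] g) (ρ : g →ₗ[K] Module.End K V)
    (T : V →ₗ[K] g) (ω₁ : g →ₗ[K] g →ₗ[K] g) (ρ₁ : g →ₗ[K] Module.End K V)
    (T₁ : V →ₗ[K] g) : Prop :=
  (∀ X Y : g × g, defBracket μ ω₁ X Y = - defBracket μ ω₁ Y X) ∧
  (∀ X Y Z : g × g,
    defBracket μ ω₁ (defBracket μ ω₁ X Y) Z + defBracket μ ω₁ (defBracket μ ω₁ Y Z) X
      + defBracket μ ω₁ (defBracket μ ω₁ Z X) Y = 0) ∧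
  (∀ (X Y : g × g) (U : V × V),
    defAction ρ ρ₁ (defBracket μ ω₁ X Y) U =
      defAction ρ ρ₁ X (defAction ρ ρ₁ Y U) - defAction ρ ρ₁ Y (defAction ρ ρ₁ X U)) ∧
  (∀ U W : V × V,
    defBracket μ ω₁ (defOp T T₁ U) (defOp T T₁ W) =
      defOp T T₁ (defAction ρ ρ₁ (defOp T T₁ U) W - defAction ρ ρ₁ (defOp T T₁ W) U))

/-- Equivalence of two infinitesimal deformations: an `R`-isomorphism of relative
Rota-Baxter Lie algebras of the form `(Id + tN, Id + tS)` compatible with the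
augmentation. -/
def AreEquivalentDeformations (μ : g →ₗ[K] g →ₗ[K] g) (ρ : g →ₗ[K] Module.End K V)
    (T : V →ₗ[K] g) (ω₁ ω₁' : g →ₗ[K] g →ₗ[K] g) (ρ₁ ρ₁' : g →ₗ[K] Module.End K V)
    (T₁ T₁' : V →ₗ[K] g) : Prop :=
  ∃ (N : g →ₗ[K] g) (S : V →ₗ[K] V),
    (∀ X Y : g × g,
      (fun Z : g × g => (Z.1, Z.2 + N Z.1)) (defBracket μ ω₁' X Y) =
        defBracket μ ω₁ ((X.1, X.2 + N X.1)) ((Y.1, Y.2 + N Y.1))) ∧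
    (∀ (X : g × g) (U : V × V),
      (fun W : V × V => (W.1, W.2 + S W.1)) (defAction ρ ρ₁' X U) =
        defAction ρ ρ₁ ((X.1, X.2 + N X.1)) ((U.1, U.2 + S U.1))) ∧
    (∀ U : V × V,
      (fun Z : g × g => (Z.1, Z.2 + N Z.1)) (defOp T T₁' U) =
        defOp T T₁ ((U.1, U.2 + S U.1)))

end

private lemma GC {K g : Type*} [Field K] [AddCommGroup g] [Module K g]
    (μ ω₁ : g →ₗ[K] g →ₗ[K] g) (hskew : ∀ x y, μ x y = - μ y x)
    (hω : ∀ x y, ω₁ x y = - ω₁ y x) (x y z : g) :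
    μ x (ω₁ y z) - μ y (ω₁ x z) + μ z (ω₁ x y)
      - ω₁ (μ x y) z + ω₁ (μ x z) y - ω₁ (μ y z) x
    = -(μ (ω₁ x y) z + μ (ω₁ y z) x + μ (ω₁ z x) y
      + ω₁ (μ x y) z + ω₁ (μ y z) x + ω₁ (μ z x) y) := by
  rw [hskew x (ω₁ y z), hskew y (ω₁ x z), hskew z (ω₁ x y), hω x z, hskew x z]
  simp only [map_neg, LinearMap.neg_apply]
  abel

/-- `(ω₁,ρ₁,T₁)` determines an infinitesimal deformation of the
relative Rota-Baxter Lie algebra `((g,[·,·]),ρ,T)` iff it is a `2`-cocycle,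
`D(ω₁,ρ₁,T₁) = 0`; and two infinitesimal deformations are equivalent iff their
difference is a coboundary `D(N,S)`.  Hence equivalence classes of infinitesimal
deformations are in bijection with `H²(g,ρ,T)`. -/
theorem stmt12 {K g V : Type*} [Field K] [CharZero K] [AddCommGroup g] [Module K g]
    [AddCommGroup V] [Module K V]
    (μ : g →ₗ[K] g →ₗ[K] g) (hskew : ∀ x y, μ x y = - μ y x)
    (hjac : ∀ x y z, μ (μ x y) z + μ (μ y z) x + μ (μ z x) y = 0)
    (ρ : g →ₗ[K] Module.End K V)
    (hrep : ∀ x y, ρ (μ x y) = ρ x * ρ y - ρ y * ρ x)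
    (T : V →ₗ[K] g)
    (hT : ∀ u v, μ (T u) (T v) = T (ρ (T u) v - ρ (T v) u)) :
    -- (a) infinitesimal deformations are exactly the 2-cocycles
    (∀ (ω₁ : g →ₗ[K] g →ₗ[K] g) (ρ₁ : g →ₗ[K] Module.End K V) (T₁ : V →ₗ[K] g),
      (∀ x y, ω₁ x y = - ω₁ y x) →
      (IsInfinitesimalDeformation μ ρ T ω₁ ρ₁ T₁ ↔
        ((∀ x y z,
            μ x (ω₁ y z) - μ y (ω₁ x z) + μ z (ω₁ x y)
            - ω₁ (μ x y) z + ω₁ (μ x z) y - ω₁ (μ y z) x = 0) ∧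
         (∀ x y, ρ (ω₁ x y) + ρ₁ (μ x y) = ρ x * ρ₁ y - ρ₁ y * ρ x + ρ₁ x * ρ y - ρ y * ρ₁ x) ∧
         (∀ u v, μ (T₁ u) (T v) + μ (T u) (T₁ v) + ω₁ (T u) (T v) =
            T (ρ (T₁ u) v - ρ (T₁ v) u + ρ₁ (T u) v - ρ₁ (T v) u)
            + T₁ (ρ (T u) v - ρ (T v) u))))) ∧
    -- (b) two infinitesimal deformations are equivalent iff they differ by a coboundary
    (∀ (ω₁ ω₁' : g →ₗ[K] g →ₗ[K] g) (ρ₁ ρ₁' : g →ₗ[K] Module.End K V) (T₁ T₁' : V →ₗ[K] g),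
      (∀ x y, ω₁ x y = - ω₁ y x) → (∀ x y, ω₁' x y = - ω₁' y x) →
      IsInfinitesimalDeformation μ ρ T ω₁ ρ₁ T₁ →
      IsInfinitesimalDeformation μ ρ T ω₁' ρ₁' T₁' →
      (AreEquivalentDeformations μ ρ T ω₁ ω₁' ρ₁ ρ₁' T₁ T₁' ↔
        ∃ (N : g →ₗ[K] g) (S : V →ₗ[K] V),
          (∀ x y, ω₁' x y - ω₁ x y = μ x (N y) + μ (N x) y - N (μ x y)) ∧
          (∀ (y : g) (u : V), ρ₁' y u - ρ₁ y u = ρ (N y) u + ρ y (S u) - S (ρ y u)) ∧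
          (∀ u, T₁' u - T₁ u = - N (T u) + T (S u)))) := by
  constructor
  · have hrep' : ∀ x y u, ρ (μ x y) u = ρ x (ρ y u) - ρ y (ρ x u) := fun x y u => by
      rw [hrep]; simp [Module.End.mul_apply]
    intro ω₁ ρ₁ T₁ hω
    constructor
    · rintro ⟨-, hJ, hR, hO⟩
      refine ⟨fun x y z => ?_, fun x y => ?_, fun u v => ?_⟩
      · have h := congrArg Prod.snd (hJ (x, 0) (y, 0) (z, 0))
        simp [defBracket] at h
        rw [GC μ ω₁ hskew hω, neg_eq_zero]
        rw [← h]; abel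
      · ext u
        have h := congrArg Prod.snd (hR (x, 0) (y, 0) (u, 0))
        simp [defAction, defBracket] at h
        simp only [Module.End.mul_apply, LinearMap.add_apply, LinearMap.sub_apply]
        rw [← sub_eq_zero] at h ⊢
        rw [← h]; abel
      · have h := congrArg Prod.snd (hO (u, 0) (v, 0))
        simp [defOp, defAction, defBracket] at h
        simp only [map_add, map_sub]
        rw [← sub_eq_zero] at h ⊢
        rw [← h]; abel
    · rintro ⟨h1, h2, h3⟩
      have hC : ∀ x y z, μ (ω₁ x y) z + μ (ω₁ y z) x + μ (ω₁ z x) y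
          + ω₁ (μ x y) z + ω₁ (μ y z) x + ω₁ (μ z x) y = 0 := fun x y z => by
        rw [← neg_eq_zero, ← GC μ ω₁ hskew hω]; exact h1 x y z
      have h2' : ∀ x y u, ρ (ω₁ x y) u + ρ₁ (μ x y) u
          = ρ x (ρ₁ y u) - ρ₁ y (ρ x u) + ρ₁ x (ρ y u) - ρ y (ρ₁ x u) := fun x y u => by
        have h := DFunLike.congr_fun (h2 x y) u
        simpa [Module.End.mul_apply] using h
      refine ⟨fun X Y => ?_, fun X Y Z => ?_, fun X Y U => ?_, fun U W => ?_⟩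
      · simp only [defBracket, Prod.neg_mk, Prod.mk.injEq]
        refine ⟨hskew _ _, ?_⟩
        rw [hskew X.1 Y.2, hskew X.2 Y.1, hω X.1 Y.1]; abel
      · have key : (μ (μ X.1 Y.1) Z.2 + μ (μ Y.1 Z.2) X.1 + μ (μ Z.2 X.1) Y.1)
            + (μ (μ X.2 Y.1) Z.1 + μ (μ Y.1 Z.1) X.2 + μ (μ Z.1 X.2) Y.1)
            + (μ (μ X.1 Y.2) Z.1 + μ (μ Y.2 Z.1) X.1 + μ (μ Z.1 X.1) Y.2)
            + (μ (ω₁ X.1 Y.1) Z.1 + μ (ω₁ Y.1 Z.1) X.1 + μ (ω₁ Z.1 X.1) Y.1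
              + ω₁ (μ X.1 Y.1) Z.1 + ω₁ (μ Y.1 Z.1) X.1 + ω₁ (μ Z.1 X.1) Y.1) = 0 := by
          rw [hjac X.1 Y.1 Z.2, hjac X.2 Y.1 Z.1, hjac X.1 Y.2 Z.1, hC X.1 Y.1 Z.1]; simp
        simp only [defBracket, Prod.mk_add_mk, Prod.mk_eq_zero, map_add, LinearMap.add_apply]
        refine ⟨hjac _ _ _, ?_⟩
        rw [← key]; abel
      · have key : (ρ (μ X.1 Y.1) U.2 - (ρ X.1 (ρ Y.1 U.2) - ρ Y.1 (ρ X.1 U.2)))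
            + (ρ (μ X.1 Y.2) U.1 - (ρ X.1 (ρ Y.2 U.1) - ρ Y.2 (ρ X.1 U.1)))
            + (ρ (μ X.2 Y.1) U.1 - (ρ X.2 (ρ Y.1 U.1) - ρ Y.1 (ρ X.2 U.1)))
            + ((ρ (ω₁ X.1 Y.1) U.1 + ρ₁ (μ X.1 Y.1) U.1)
              - (ρ X.1 (ρ₁ Y.1 U.1) - ρ₁ Y.1 (ρ X.1 U.1) + ρ₁ X.1 (ρ Y.1 U.1)
                - ρ Y.1 (ρ₁ X.1 U.1))) = 0 := by
          rw [hrep' X.1 Y.1 U.2, hrep' X.1 Y.2 U.1, hrep' X.2 Y.1 U.1, h2' X.1 Y.1 U.1]; abel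
        simp only [defAction, defBracket, Prod.mk_sub_mk, Prod.mk.injEq, map_add,
          LinearMap.add_apply]
        refine ⟨hrep' _ _ _, ?_⟩
        rw [← sub_eq_zero, ← key]; abel
      · have key : (μ (T U.1) (T W.2) - T (ρ (T U.1) W.2 - ρ (T W.2) U.1))
            + (μ (T U.2) (T W.1) - T (ρ (T U.2) W.1 - ρ (T W.1) U.2))
            + ((μ (T₁ U.1) (T W.1) + μ (T U.1) (T₁ W.1) + ω₁ (T U.1) (T W.1))
              - (T (ρ (T₁ U.1) W.1 - ρ (T₁ W.1) U.1 + ρ₁ (T U.1) W.1 - ρ₁ (T W.1) U.1)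
                + T₁ (ρ (T U.1) W.1 - ρ (T W.1) U.1))) = 0 := by
          rw [hT U.1 W.2, hT U.2 W.1, h3 U.1 W.1]; abel
        simp only [defOp, defAction, defBracket, Prod.mk_sub_mk, Prod.mk.injEq, map_add,
          map_sub, LinearMap.add_apply, LinearMap.sub_apply]
        refine ⟨by rw [hT U.1 W.1, map_sub], ?_⟩
        rw [← sub_eq_zero, ← key]
        simp only [map_add, map_sub]
        abel
  · intro ω₁ ω₁' ρ₁ ρ₁' T₁ T₁' hω hω' hd hd'
    constructor
    · rintro ⟨N, S, hB, hA, hOp⟩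
      refine ⟨N, S, fun x y => ?_, fun y u => ?_, fun u => ?_⟩
      · have h := congrArg Prod.snd (hB (x, 0) (y, 0))
        simp [defBracket] at h
        rw [← sub_eq_zero] at h ⊢
        rw [← h]; abel
      · have h := congrArg Prod.snd (hA (y, 0) (u, 0))
        simp [defAction] at h
        rw [← sub_eq_zero] at h ⊢
        rw [← h]; abel
      · have h := congrArg Prod.snd (hOp (u, 0))
        simp [defOp] at h
        rw [← sub_eq_zero] at h ⊢
        rw [← h]; abel
    · rintro ⟨N, S, c1, c2, c3⟩
      refine ⟨N, S, fun X Y => ?_, fun X U => ?_, fun U => ?_⟩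
      · simp only [defBracket, Prod.mk.injEq, map_add, LinearMap.add_apply]
        refine ⟨trivial, ?_⟩
        have h := c1 X.1 Y.1
        rw [← sub_eq_zero] at h ⊢
        rw [← h]; abel
      · simp only [defAction, defBracket, Prod.mk.injEq, map_add, LinearMap.add_apply]
        refine ⟨trivial, ?_⟩
        have h := c2 X.1 U.1
        rw [← sub_eq_zero] at h ⊢
        rw [← h]; abel
      · simp only [defOp, Prod.mk.injEq, map_add]
        refine ⟨trivial, ?_⟩
        have h := c3 U.1
        rw [← sub_eq_zero] at h ⊢
        rw [← h]; abel
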